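/- The canonical root of the characteristic function at the zero potential (Lemma on the canonical root, equation (6.43), in explicit product form). Set ω(λ) := λ − 1/(16λ) for λ ∈ ℂ* := ℂ∖{0}. For n ∈ ℤ let τₙ be the solution of τ − 1/(16τ) = nπ given by τₙ := (nπ + √(n²π² + 1/4))/2 for n ≥ 0 and τₙ := (nπ − √(n²π² + 1/4))/2 for n ≤ −1 (these are the collapsed gap midpoints at the zero potential), and set π₀ := 1, πₙ := nπ for n ≠ 0. Then for every λ ∈ ℂ*, the symmetric partial products converge and lim_{N→∞} ∏_{n=−N}^{N} [(τₙ − λ)·(τₙ + 1/(16λ)) / (πₙ·τₙ)] = −sin(ω(λ)); equivalently, the canonical root of χ_p(λ, 0) = −sin²(ω(λ)) defined by these products equals −i·sin(ω(λ)). -/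

import Mathlib

open Filter

noncomputable section

/-- The collapsed gap midpoints at the zero potential: for `n ∈ ℤ`, `tauZero n` is the solution
of `τ - 1/(16 τ) = n π` given by `(nπ + √(n²π² + 1/4))/2` for `n ≥ 0` and by
`(nπ - √(n²π² + 1/4))/2` for `n ≤ -1`. -/
def tauZero (n : ℤ) : ℝ :=
  if 0 ≤ n then ((n : ℝ) * Real.pi + Real.sqrt ((n : ℝ) ^ 2 * Real.pi ^ 2 + 1 / 4)) / 2
  else ((n : ℝ) * Real.pi - Real.sqrt ((n : ℝ) ^ 2 * Real.pi ^ 2 + 1 / 4)) / 2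

/-- `π₀ := 1` and `πₙ := nπ` for `n ≠ 0`. -/
def piZ (n : ℤ) : ℂ := if n = 0 then 1 else (n : ℂ) * (Real.pi : ℂ)

lemma tau_quad (n : ℤ) : (tauZero n) ^ 2 - 1 / 16 = (n : ℝ) * Real.pi * tauZero n := by
  have hs : Real.sqrt ((n : ℝ) ^ 2 * Real.pi ^ 2 + 1 / 4) ^ 2
      = (n : ℝ) ^ 2 * Real.pi ^ 2 + 1 / 4 := by
    apply Real.sq_sqrt; positivity
  unfold tauZero
  split <;> nlinarith [hs]

lemma tau_ne (n : ℤ) : tauZero n ≠ 0 := by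
  intro h
  have := tau_quad n
  rw [h] at this
  norm_num at this

lemma piZ_ne (n : ℤ) : piZ n ≠ 0 := by
  unfold piZ
  split
  · exact one_ne_zero
  · exact mul_ne_zero (Int.cast_ne_zero.2 (by assumption))
      (by exact_mod_cast Complex.ofReal_ne_zero.2 Real.pi_ne_zero)

lemma factor_eq (lam : ℂ) (hlam : lam ≠ 0) (n : ℤ) :
    ((tauZero n : ℂ) - lam) * ((tauZero n : ℂ) + 1 / (16 * lam)) /
      (piZ n * (tauZero n : ℂ))
      = ((n : ℂ) * (Real.pi : ℂ) - (lam - 1 / (16 * lam))) / piZ n := by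
  have hq : ((tauZero n : ℂ)) ^ 2 - 1 / 16 = (n : ℂ) * (Real.pi : ℂ) * (tauZero n : ℂ) := by
    have h := tau_quad n
    have := congrArg (Complex.ofReal) h
    push_cast at this
    exact this
  have ht : (tauZero n : ℂ) ≠ 0 := Complex.ofReal_ne_zero.2 (tau_ne n)
  have hp := piZ_ne n
  have key : ((tauZero n : ℂ) - lam) * ((tauZero n : ℂ) + 1 / (16 * lam))
      = (tauZero n : ℂ) * ((n : ℂ) * (Real.pi : ℂ) - (lam - 1 / (16 * lam))) := by
    field_simp
    linear_combination (16 * lam) * hq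
  rw [key]
  field_simp

lemma prod_eq (w : ℂ) (N : ℕ) :
    ∏ n ∈ Finset.Icc (-(N : ℤ)) (N : ℤ), ((n : ℂ) * (Real.pi : ℂ) - w) / piZ n
      = -w * ∏ j ∈ Finset.range N,
          ((1 : ℂ) - (w / (Real.pi : ℂ)) ^ 2 / ((j : ℂ) + 1) ^ 2) := by
  have hpi : (Real.pi : ℂ) ≠ 0 := Complex.ofReal_ne_zero.2 Real.pi_ne_zero
  induction N with
  | zero => simp [piZ]
  | succ N ih =>
    have hset : Finset.Icc (-((N : ℤ) + 1)) ((N : ℤ) + 1)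
        = insert ((N : ℤ) + 1) (insert (-((N : ℤ) + 1)) (Finset.Icc (-(N : ℤ)) (N : ℤ))) := by
      ext x
      simp only [Finset.mem_insert, Finset.mem_Icc]
      omega
    push_cast
    rw [hset, Finset.prod_insert (by simp only [Finset.mem_insert, Finset.mem_Icc]; omega),
      Finset.prod_insert (by simp only [Finset.mem_Icc]; omega),
      Finset.prod_range_succ]
    push_cast at ih ⊢
    rw [ih]
    have hN1 : ((N : ℂ) + 1) ≠ 0 := by
      intro h
      have : ((N : ℂ) + 1) = ((N + 1 : ℕ) : ℂ) := by push_cast; ring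
      rw [this] at h
      exact Nat.cast_ne_zero.2 (Nat.succ_ne_zero N) h
    have hpz : piZ ((N : ℤ) + 1) = ((N : ℂ) + 1) * (Real.pi : ℂ) := by
      unfold piZ
      rw [if_neg (by omega)]
      push_cast; ring
    have hpz' : piZ (-((N : ℤ) + 1)) = -((N : ℂ) + 1) * (Real.pi : ℂ) := by
      unfold piZ
      rw [if_neg (by omega)]
      push_cast; ring
    rw [hpz, hpz']
    set P := ∏ j ∈ Finset.range N, ((1 : ℂ) - (w / (Real.pi : ℂ)) ^ 2 / ((j : ℂ) + 1) ^ 2) with hP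
    have ha : ((N : ℂ) + 1) * (Real.pi : ℂ) ≠ 0 := mul_ne_zero hN1 hpi
    have h2 : (-((N : ℂ) + 1)) * (Real.pi : ℂ) = -(((N : ℂ) + 1) * (Real.pi : ℂ)) := by ring
    have h3 : (w / (Real.pi : ℂ)) ^ 2 / ((N : ℂ) + 1) ^ 2
        = w ^ 2 / (((N : ℂ) + 1) * (Real.pi : ℂ)) ^ 2 := by
      rw [div_pow, div_div]
      congr 1
      ring
    rw [h2, h3]
    generalize ((N : ℂ) + 1) * (Real.pi : ℂ) = a at ha ⊢
    field_simp
    ring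


/-- **The canonical root of the characteristic function at the zero potential**
(equation (6.43), in explicit product form): for every `λ ∈ ℂ*`, the symmetric partial
products converge and
`∏_{n∈ℤ} (τₙ - λ)(τₙ + 1/(16λ)) / (πₙ τₙ) = -sin(ω(λ))` where `ω(λ) = λ - 1/(16λ)`;
equivalently, the canonical root of `χ_p(λ,0) = -sin²(ω(λ))` defined by these products
equals `-i sin(ω(λ))`. -/
theorem canonical_root_at_zero_potential (lam : ℂ) (hlam : lam ≠ 0) :
    Tendsto (fun N : ℕ => ∏ n ∈ Finset.Icc (-(N : ℤ)) (N : ℤ),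
        ((tauZero n : ℂ) - lam) * ((tauZero n : ℂ) + 1 / (16 * lam)) /
          (piZ n * (tauZero n : ℂ)))
      atTop (nhds (-Complex.sin (lam - 1 / (16 * lam)))) := by
  set w : ℂ := lam - 1 / (16 * lam) with hw
  have hpi : (Real.pi : ℂ) ≠ 0 := Complex.ofReal_ne_zero.2 Real.pi_ne_zero
  have heq : (fun N : ℕ => ∏ n ∈ Finset.Icc (-(N : ℤ)) (N : ℤ),
      ((tauZero n : ℂ) - lam) * ((tauZero n : ℂ) + 1 / (16 * lam)) /
        (piZ n * (tauZero n : ℂ)))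
      = fun N : ℕ => -w * ∏ j ∈ Finset.range N,
          ((1 : ℂ) - (w / (Real.pi : ℂ)) ^ 2 / ((j : ℂ) + 1) ^ 2) := by
    funext N
    rw [← prod_eq w N]
    exact Finset.prod_congr rfl fun n _ => factor_eq lam hlam n
  rw [heq]
  have h := (Complex.tendsto_euler_sin_prod (w / (Real.pi : ℂ))).neg
  have h1 : (Real.pi : ℂ) * (w / (Real.pi : ℂ)) = w := mul_div_cancel₀ w hpi
  rw [h1] at h
  convert h using 2 with N
  ring
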